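/- arXiv:2403.02657 — 6 statements merged into one kernel-verified Lean document; each statement's English description precedes it below -/
import Mathlib

section
/- Let α ≥ 1 be a real number and n ∈ ℤ. There exists a constant C > 0 (depending on α and n) such that for all complex numbers z and w one has | |z|^{α−n} z^n − |w|^{α−n} w^n | ≤ C (|z|^{α−1} + |w|^{α−1}) |z − w|. -/
/-!
Write `z = ‖z‖ u` with `‖u‖ = 1`, so that the nonlinearity is `‖z‖ ^ α u ^ n`. For `‖w‖ ≤ ‖z‖`
and `w = ‖w‖ v`, split the difference as `‖z‖ ^ α (u ^ n - v ^ n) + (‖z‖ ^ α - ‖w‖ ^ α) v ^ n`.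
On the unit sphere `‖u ^ n - v ^ n‖ ≤ |n| ‖u - v‖ ≤ 2 |n| ‖z - w‖ / ‖z‖`, and Bernoulli's
inequality bounds the radial term by `α ‖z‖ ^ (α - 1) ‖z - w‖`.
-/

theorem norm_pow_sub_pow_le_of_norm_le_one {R : Type*} [SeminormedRing R] [NormOneClass R]
    {u v : R} (hu : ‖u‖ ≤ 1) (hv : ‖v‖ ≤ 1) (k : ℕ) :
    ‖u ^ k - v ^ k‖ ≤ k * ‖u - v‖ := by
  induction k with
  | zero => simp
  | succ k ih =>
    have hsplit : u ^ (k + 1) - v ^ (k + 1) = u ^ k * (u - v) + (u ^ k - v ^ k) * v := by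
      noncomm_ring
    have huk : ‖u ^ k‖ ≤ 1 := (norm_pow_le u k).trans (pow_le_one₀ (norm_nonneg u) hu)
    calc ‖u ^ (k + 1) - v ^ (k + 1)‖
        ≤ ‖u ^ k‖ * ‖u - v‖ + ‖u ^ k - v ^ k‖ * ‖v‖ := by
          rw [hsplit]
          exact (norm_add_le _ _).trans (add_le_add (norm_mul_le _ _) (norm_mul_le _ _))
      _ ≤ 1 * ‖u - v‖ + (k * ‖u - v‖) * 1 := by gcongr
      _ = (k + 1 : ℕ) * ‖u - v‖ := by push_cast; ring

theorem norm_zpow_sub_zpow_le_of_norm_eq_one {K : Type*} [NormedDivisionRing K]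
    {u v : K} (hu : ‖u‖ = 1) (hv : ‖v‖ = 1) (n : ℤ) :
    ‖u ^ n - v ^ n‖ ≤ |(n : ℝ)| * ‖u - v‖ := by
  obtain ⟨k, rfl | rfl⟩ := Int.eq_nat_or_neg n
  · simpa using norm_pow_sub_pow_le_of_norm_le_one hu.le hv.le k
  · have hinv : ‖u⁻¹ - v⁻¹‖ = ‖u - v‖ := by
      rw [← dist_eq_norm, dist_inv_inv₀ (norm_ne_zero_iff.mp (by simp [hu]))
        (norm_ne_zero_iff.mp (by simp [hv])), hu, hv, dist_eq_norm, mul_one, div_one]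
    simpa [inv_pow, hinv] using
      norm_pow_sub_pow_le_of_norm_le_one (u := u⁻¹) (v := v⁻¹) (by simp [hu]) (by simp [hv]) k

theorem norm_inv_norm_smul_sub_le {E : Type*} [NormedAddCommGroup E] [NormedSpace ℝ E]
    {x y : E} (h : ‖y‖ ≤ ‖x‖) :
    ‖‖x‖⁻¹ • x - ‖y‖⁻¹ • y‖ ≤ 2 * ‖x - y‖ / ‖x‖ := by
  have hrescale : ‖(‖x‖⁻¹ - ‖y‖⁻¹) • y‖ ≤ ‖x - y‖ / ‖x‖ := by
    rcases eq_or_ne y 0 with rfl | hy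
    · simp only [smul_zero, norm_zero]; positivity
    have hy' : 0 < ‖y‖ := norm_pos_iff.mpr hy
    have hx' : 0 < ‖x‖ := hy'.trans_le h
    calc ‖(‖x‖⁻¹ - ‖y‖⁻¹) • y‖ = (‖x‖ - ‖y‖) / ‖x‖ := by
          rw [norm_smul, Real.norm_eq_abs, abs_sub_comm,
            abs_of_nonneg (sub_nonneg.mpr (inv_anti₀ hy' h))]
          field_simp
      _ ≤ ‖x - y‖ / ‖x‖ := by gcongr; exact norm_sub_norm_le x y
  calc ‖‖x‖⁻¹ • x - ‖y‖⁻¹ • y‖ = ‖‖x‖⁻¹ • (x - y) + (‖x‖⁻¹ - ‖y‖⁻¹) • y‖ := by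
        rw [smul_sub, sub_smul]; abel_nf
    _ ≤ ‖x - y‖ / ‖x‖ + ‖x - y‖ / ‖x‖ := by
        refine (norm_add_le _ _).trans (add_le_add (le_of_eq ?_) hrescale)
        rw [norm_smul, norm_inv, norm_norm, inv_mul_eq_div]
    _ = 2 * ‖x - y‖ / ‖x‖ := by ring

theorem Real.rpow_sub_rpow_le_mul_sub {a b p : ℝ} (hb : 0 ≤ b) (hba : b ≤ a) (hp : 1 ≤ p) :
    a ^ p - b ^ p ≤ p * a ^ (p - 1) * (a - b) := by
  rcases (hb.trans hba).eq_or_lt with rfl | ha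
  · rw [le_antisymm hba hb]; simp
  -- Bernoulli's inequality for `(1 + s) ^ p` at `1 + s = b / a`, multiplied by `a ^ p`
  have hbern := one_add_mul_self_le_rpow_one_add (s := b / a - 1)
    (by linarith [div_nonneg hb ha.le]) hp
  rw [add_sub_cancel, Real.div_rpow hb ha.le, le_div_iff₀ (by positivity)] at hbern
  have hpow : a ^ p = a ^ (p - 1) * a := by
    rw [Real.rpow_sub_one ha.ne', div_mul_cancel₀ _ ha.ne']
  rw [hpow] at hbern ⊢
  field_simp at hbern
  nlinarith

section GaugePow

variable {𝕜 : Type*} [RCLike 𝕜]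

noncomputable def gaugePow (α : ℝ) (n : ℤ) (z : 𝕜) : 𝕜 :=
  ((‖z‖ ^ (α - n) : ℝ) : 𝕜) * z ^ n

variable {α : ℝ} {n : ℤ}

theorem norm_gaugePow (hα : α ≠ 0) (z : 𝕜) : ‖gaugePow α n z‖ = ‖z‖ ^ α := by
  rw [gaugePow, norm_mul, RCLike.norm_ofReal, abs_of_nonneg (by positivity), norm_zpow,
    ← Real.rpow_intCast, ← Real.rpow_add' (norm_nonneg z) (by simpa using hα), sub_add_cancel]

theorem gaugePow_zero (hα : α ≠ 0) : gaugePow α n (0 : 𝕜) = 0 :=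
  norm_eq_zero.mp (by rw [norm_gaugePow hα, norm_zero, Real.zero_rpow hα])

theorem gaugePow_eq_mul_zpow_smul {z : 𝕜} (hz : z ≠ 0) :
    gaugePow α n z = ((‖z‖ ^ α : ℝ) : 𝕜) * (‖z‖⁻¹ • z) ^ n := by
  have hz' : 0 < ‖z‖ := norm_pos_iff.mpr hz
  rw [gaugePow, RCLike.real_smul_eq_coe_mul, mul_zpow, ← mul_assoc, ← RCLike.ofReal_zpow,
    ← RCLike.ofReal_mul, inv_zpow', ← Real.rpow_intCast, ← Real.rpow_add hz', Int.cast_neg,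
    sub_eq_add_neg]

theorem norm_gaugePow_sub_le_of_norm_le (hα : 1 ≤ α) {z w : 𝕜} (h : ‖w‖ ≤ ‖z‖) :
    ‖gaugePow α n z - gaugePow α n w‖ ≤ (2 * |(n : ℝ)| + α) * ‖z‖ ^ (α - 1) * ‖z - w‖ := by
  have hα₀ : α ≠ 0 := by positivity
  have hpow : ‖z‖ ^ α = ‖z‖ ^ (α - 1) * ‖z‖ := by
    rw [← Real.rpow_add_one' (norm_nonneg z) (by linarith), sub_add_cancel]
  rcases eq_or_ne w 0 with rfl | hw
  · rw [gaugePow_zero hα₀, sub_zero, sub_zero, norm_gaugePow hα₀, hpow, mul_assoc]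
    exact le_mul_of_one_le_left (by positivity) (by linarith [abs_nonneg (n : ℝ)])
  have hz : z ≠ 0 := norm_pos_iff.mp ((norm_pos_iff.mpr hw).trans_le h)
  have hu : ‖‖z‖⁻¹ • z‖ = 1 := by simp [norm_smul, hz]
  have hv : ‖‖w‖⁻¹ • w‖ = 1 := by simp [norm_smul, hw]
  have hdir := (norm_zpow_sub_zpow_le_of_norm_eq_one hu hv n).trans
    (mul_le_mul_of_nonneg_left (norm_inv_norm_smul_sub_le h) (abs_nonneg _))
  have hmod := Real.rpow_sub_rpow_le_mul_sub (norm_nonneg w) h hα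
  rw [gaugePow_eq_mul_zpow_smul hz, gaugePow_eq_mul_zpow_smul hw]
  set u := ‖z‖⁻¹ • z
  set v := ‖w‖⁻¹ • w
  calc ‖((‖z‖ ^ α : ℝ) : 𝕜) * u ^ n - ((‖w‖ ^ α : ℝ) : 𝕜) * v ^ n‖
      = ‖((‖z‖ ^ α : ℝ) : 𝕜) * (u ^ n - v ^ n) + ((‖z‖ ^ α - ‖w‖ ^ α : ℝ) : 𝕜) * v ^ n‖ := by
        push_cast; ring_nf
    _ ≤ ‖z‖ ^ α * ‖u ^ n - v ^ n‖ + (‖z‖ ^ α - ‖w‖ ^ α) := by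
        refine (norm_add_le _ _).trans (le_of_eq ?_)
        rw [norm_mul, norm_mul, norm_zpow, hv, one_zpow, mul_one, RCLike.norm_ofReal,
          RCLike.norm_ofReal, abs_of_nonneg (by positivity),
          abs_of_nonneg (sub_nonneg.mpr (Real.rpow_le_rpow (norm_nonneg w) h (by linarith)))]
    _ ≤ ‖z‖ ^ α * (|(n : ℝ)| * (2 * ‖z - w‖ / ‖z‖)) + α * ‖z‖ ^ (α - 1) * ‖z - w‖ := by
        gcongr
        exact hmod.trans (by gcongr; exact norm_sub_norm_le z w)
    _ = (2 * |(n : ℝ)| + α) * ‖z‖ ^ (α - 1) * ‖z - w‖ := by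
        rw [hpow]; field_simp [norm_ne_zero_iff.mpr hz]

end GaugePow

/-- Lemma 2.2 (nl:1): for `α ≥ 1` and `n : ℤ`, there is `C > 0` such that
`| |z|^(α−n) z^n − |w|^(α−n) w^n | ≤ C (|z|^(α−1) + |w|^(α−1)) |z − w|` for all `z w : ℂ`. -/
theorem nonlinearity_difference_estimate (α : ℝ) (hα : 1 ≤ α) (n : ℤ) :
    ∃ C : ℝ, 0 < C ∧ ∀ z w : ℂ,
      ‖(((‖z‖ ^ (α - (n : ℝ)) : ℝ) : ℂ) * z ^ n
          - ((‖w‖ ^ (α - (n : ℝ)) : ℝ) : ℂ) * w ^ n)‖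
        ≤ C * ((‖z‖ ^ (α - 1) + ‖w‖ ^ (α - 1)) * ‖z - w‖) := by
  refine ⟨2 * |(n : ℝ)| + α, by positivity, fun z w => ?_⟩
  change ‖gaugePow α n z - gaugePow α n w‖ ≤ _
  wlog h : ‖w‖ ≤ ‖z‖ generalizing z w
  · simpa only [norm_sub_rev, add_comm] using this w z (le_of_not_ge h)
  calc ‖gaugePow α n z - gaugePow α n w‖
      ≤ (2 * |(n : ℝ)| + α) * ‖z‖ ^ (α - 1) * ‖z - w‖ := norm_gaugePow_sub_le_of_norm_le hα h
    _ ≤ (2 * |(n : ℝ)| + α) * ((‖z‖ ^ (α - 1) + ‖w‖ ^ (α - 1)) * ‖z - w‖) := by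
        rw [mul_assoc]
        gcongr
        exact le_add_of_nonneg_right (by positivity)
end

section
/- Let p ∈ (0,2) be real and n ∈ ℕ (including n = 0). There exists a constant C > 0 (depending on p and n) such that for all reals a > 0 and all complex z one has | ( |z|^{p−n} − (a + |z|²)^{(p−n)/2} ) z^n | ≤ C a^{p/2}. -/
/-!
Put `x = ‖z‖²` and `s = (p - n)/2`, so that the quantity is `|x^s - (a + x)^s| · x^(n/2)` and
`s + n/2 = p/2 ∈ (0, 1)`. Where `x ≤ a`, each of the two terms is bounded by `2 a^(p/2)`. Where
`a ≤ x`, the mean value theorem for `u ↦ u^s` on `[x, x + a]` (whose derivative is largest at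
`u = x` because `s ≤ 1`) gives `|x^s - (a + x)^s| ≤ |s| x^(s-1) a`, and
`a x^(p/2 - 1) ≤ a^(p/2)` because `p/2 - 1 ≤ 0`.
-/

open Real

section RpowDifference

variable {a x s m : ℝ}

lemma abs_add_rpow_sub_rpow_le (hx : 0 < x) (ha : 0 ≤ a) (hs : s ≤ 1) :
    |(x + a) ^ s - x ^ s| ≤ |s| * x ^ (s - 1) * a := by
  have hderiv : ∀ u ∈ Set.Icc x (x + a),
      HasDerivWithinAt (fun u : ℝ => u ^ s) (s * u ^ (s - 1)) (Set.Icc x (x + a)) u :=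
    fun u hu => (hasDerivAt_rpow_const (Or.inl (hx.trans_le hu.1).ne')).hasDerivWithinAt
  have hbound : ∀ u ∈ Set.Icc x (x + a), ‖s * u ^ (s - 1)‖ ≤ |s| * x ^ (s - 1) := by
    intro u hu
    rw [norm_mul, norm_eq_abs, norm_of_nonneg (rpow_nonneg (hx.le.trans hu.1) _)]
    exact mul_le_mul_of_nonneg_left (rpow_le_rpow_of_nonpos hx hu.1 (by linarith)) (abs_nonneg s)
  have := (convex_Icc x (x + a)).norm_image_sub_le_of_norm_hasDerivWithin_le hderiv hbound
    (Set.left_mem_Icc.2 (by linarith)) (Set.right_mem_Icc.2 (by linarith))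
  simpa [norm_eq_abs, abs_of_nonneg ha] using this

lemma abs_rpow_sub_add_rpow_mul_rpow_le_of_le (ha : 0 < a) (hx : 0 ≤ x) (hxa : x ≤ a)
    (hs : s ≤ 1) (hm : 0 ≤ m) (hsm : 0 < s + m) :
    |x ^ s - (a + x) ^ s| * x ^ m ≤ 3 * a ^ (s + m) := by
  have hfirst : x ^ s * x ^ m ≤ a ^ (s + m) := by
    rw [← rpow_add' hx hsm.ne']
    exact rpow_le_rpow hx hxa hsm.le
  have hsecond : (a + x) ^ s * x ^ m ≤ 2 * a ^ (s + m) := by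
    have hbase : (a + x) ^ s ≤ 2 * a ^ s := by
      rcases le_or_gt 0 s with hs0 | hs0
      · calc (a + x) ^ s ≤ (2 * a) ^ s := rpow_le_rpow (by positivity) (by linarith) hs0
          _ = 2 ^ s * a ^ s := mul_rpow zero_le_two ha.le
          _ ≤ 2 * a ^ s := by
            gcongr
            simpa using rpow_le_rpow_of_exponent_le one_le_two hs
      · calc (a + x) ^ s ≤ a ^ s := rpow_le_rpow_of_nonpos ha (by linarith) hs0.le
          _ ≤ 2 * a ^ s := by linarith [rpow_pos_of_pos ha s]
    calc (a + x) ^ s * x ^ m ≤ 2 * a ^ s * a ^ m := by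
          gcongr
      _ = 2 * a ^ (s + m) := by rw [mul_assoc, ← rpow_add ha]
  calc |x ^ s - (a + x) ^ s| * x ^ m ≤ (x ^ s + (a + x) ^ s) * x ^ m := by
        gcongr
        exact (abs_sub _ _).trans_eq (by
          rw [abs_of_nonneg (rpow_nonneg hx _), abs_of_nonneg (rpow_nonneg (by linarith) _)])
    _ ≤ 3 * a ^ (s + m) := by linarith

lemma abs_rpow_sub_add_rpow_mul_rpow_le_of_ge (ha : 0 < a) (hax : a ≤ x) (hs : s ≤ 1)
    (hsm : s + m ≤ 1) :
    |x ^ s - (a + x) ^ s| * x ^ m ≤ |s| * a ^ (s + m) := by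
  have hx : 0 < x := ha.trans_le hax
  calc |x ^ s - (a + x) ^ s| * x ^ m ≤ |s| * x ^ (s - 1) * a * x ^ m := by
        rw [abs_sub_comm, add_comm]
        gcongr
        exact abs_add_rpow_sub_rpow_le hx ha.le hs
    _ = |s| * (a * x ^ (s - 1 + m)) := by rw [rpow_add hx]; ring
    _ ≤ |s| * (a * a ^ (s - 1 + m)) := by
        have := rpow_le_rpow_of_nonpos ha hax (show s - 1 + m ≤ 0 by linarith)
        gcongr
    _ = |s| * a ^ (s + m) := by
        nth_rw 1 [← rpow_one a]
        rw [← rpow_add ha]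
        ring_nf

lemma abs_rpow_sub_add_rpow_mul_rpow_le (ha : 0 < a) (hx : 0 ≤ x) (hs : s ≤ 1) (hm : 0 ≤ m)
    (hsm₀ : 0 < s + m) (hsm₁ : s + m ≤ 1) :
    |x ^ s - (a + x) ^ s| * x ^ m ≤ (|s| + 3) * a ^ (s + m) := by
  have : 0 < a ^ (s + m) := rpow_pos_of_pos ha _
  rcases le_total x a with hxa | hax
  · linarith [abs_rpow_sub_add_rpow_mul_rpow_le_of_le ha hx hxa hs hm hsm₀,
      abs_nonneg s, mul_nonneg (abs_nonneg s) this.le]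
  · nlinarith [abs_rpow_sub_add_rpow_mul_rpow_le_of_ge ha hax hs hsm₁]

end RpowDifference

lemma rpow_eq_sq_rpow_div_two {r : ℝ} (hr : 0 ≤ r) (y : ℝ) : r ^ y = (r ^ 2) ^ (y / 2) := by
  rw [← rpow_natCast, ← rpow_mul hr]
  ring_nf

/-- Lemma 5.4 (mph:1): for `p ∈ (0,2)` and `n : ℕ`, there is `C > 0` such that
`| (|z|^(p−n) − (a + |z|²)^((p−n)/2)) z^n | ≤ C a^(p/2)` for all `a > 0` and `z : ℂ`. -/
theorem modification_error_bound (p : ℝ) (hp0 : 0 < p) (hp2 : p < 2) (n : ℕ) :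
    ∃ C : ℝ, 0 < C ∧ ∀ a : ℝ, 0 < a → ∀ z : ℂ,
      ‖((((‖z‖ ^ (p - (n : ℝ))
            - (a + ‖z‖ ^ 2) ^ ((p - (n : ℝ)) / 2)) : ℝ) : ℂ) * z ^ n)‖
        ≤ C * a ^ (p / 2) := by
  refine ⟨|(p - n) / 2| + 3, by positivity, fun a ha z => ?_⟩
  have hn : (0 : ℝ) ≤ n := n.cast_nonneg
  have key := abs_rpow_sub_add_rpow_mul_rpow_le (s := (p - n) / 2) (m := n / 2) ha
    (sq_nonneg ‖z‖) (by linarith) (by positivity) (by linarith) (by linarith)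
  rw [show (p - n) / 2 + n / 2 = p / 2 by ring] at key
  rw [norm_mul, Complex.norm_real, norm_eq_abs, norm_pow, ← rpow_natCast ‖z‖ n,
    rpow_eq_sq_rpow_div_two (norm_nonneg z) (p - n), rpow_eq_sq_rpow_div_two (norm_nonneg z) n]
  exact key
end

section
/- Let p ∈ (0,1) be real and n ∈ ℕ (including n = 0). There exists a constant C > 0 (depending on p and n) such that for all reals a > 0 and all complex z, w one has | (a + |z|²)^{(p−n)/2} z^n − (a + |w|²)^{(p−n)/2} w^n | ≤ C |z − w|^p. -/
/-!
Write `⟨z⟩ = √(a + |z|²)`, so that `(a + |z|²)^((p-n)/2) z^n = ⟨z⟩^p (z/⟨z⟩)^n`.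
The bracket `⟨·⟩` is `1`-Lipschitz, hence `⟨·⟩^p` is `p`-Hölder with constant `1`. The factor
`z/⟨z⟩` lies in the unit disc and moves by at most `min (2, 2|z-w|/⟨w⟩) ≤ 2 (|z-w|/⟨w⟩)^p`,
so its `n`-th power moves by at most `n` times that, and the weight `⟨w⟩^p` in front cancels the
denominator. Altogether the constant `1 + 2n` works.
-/

namespace Real

theorem abs_rpow_sub_rpow_le {x y p : ℝ} (hx : 0 ≤ x) (hy : 0 ≤ y) (hp0 : 0 ≤ p) (hp1 : p ≤ 1) :
    |x ^ p - y ^ p| ≤ |x - y| ^ p := by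
  wlog hyx : y ≤ x generalizing x y
  · rw [abs_sub_comm, abs_sub_comm x]
    exact this hy hx (le_of_not_ge hyx)
  have hsub : x ^ p ≤ (x - y) ^ p + y ^ p := by
    simpa using rpow_add_le_add_rpow (sub_nonneg.2 hyx) hy hp0 hp1
  rw [abs_of_nonneg (sub_nonneg.2 (rpow_le_rpow hy hyx hp0)), abs_of_nonneg (sub_nonneg.2 hyx)]
  linarith

theorem min_one_le_rpow {t p : ℝ} (ht : 0 ≤ t) (hp0 : 0 ≤ p) (hp1 : p ≤ 1) :
    min 1 t ≤ t ^ p := by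
  rcases le_total t 1 with h | h
  · exact (min_le_right _ _).trans (self_le_rpow_of_le_one ht h hp1)
  · exact (min_le_left _ _).trans (one_le_rpow h hp0)

theorem sqrt_rpow_mul_inv_pow {t : ℝ} (ht : 0 < t) (p : ℝ) (n : ℕ) :
    √t ^ p * (√t)⁻¹ ^ n = t ^ ((p - n) / 2) := by
  rw [sqrt_eq_rpow, ← rpow_mul ht.le, ← rpow_natCast, ← rpow_neg_one, ← rpow_mul ht.le,
    ← rpow_mul ht.le, ← rpow_add ht]
  ring_nf

end Real

section PowDifference

variable {R : Type*} [SeminormedRing R] [NormOneClass R] {x y : R}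

theorem norm_pow_sub_pow_le_of_norm_le_one_s3 (hx : ‖x‖ ≤ 1) (hy : ‖y‖ ≤ 1) (n : ℕ) :
    ‖x ^ n - y ^ n‖ ≤ n * ‖x - y‖ := by
  induction n with
  | zero => simp
  | succ n ih =>
    have hxn : ‖x ^ n‖ ≤ 1 := (norm_pow_le x n).trans (pow_le_one₀ (norm_nonneg x) hx)
    calc ‖x ^ (n + 1) - y ^ (n + 1)‖ = ‖x ^ n * (x - y) + (x ^ n - y ^ n) * y‖ := by
          congr 1; noncomm_ring
      _ ≤ ‖x ^ n‖ * ‖x - y‖ + ‖x ^ n - y ^ n‖ * ‖y‖ :=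
          (norm_add_le _ _).trans (add_le_add (norm_mul_le _ _) (norm_mul_le _ _))
      _ ≤ 1 * ‖x - y‖ + n * ‖x - y‖ * 1 := by gcongr
      _ = (n + 1 : ℕ) * ‖x - y‖ := by push_cast; ring

theorem norm_smul_pow_sub_smul_pow_le [NormedAlgebra ℝ R] (hx : ‖x‖ ≤ 1) (hy : ‖y‖ ≤ 1)
    (r : ℝ) {s : ℝ} (hs : 0 ≤ s) (n : ℕ) :
    ‖r • x ^ n - s • y ^ n‖ ≤ |r - s| + s * (n * ‖x - y‖) := by
  have hxn : ‖x ^ n‖ ≤ 1 := (norm_pow_le x n).trans (pow_le_one₀ (norm_nonneg x) hx)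
  calc ‖r • x ^ n - s • y ^ n‖ = ‖(r - s) • x ^ n + s • (x ^ n - y ^ n)‖ := by
        rw [sub_smul, smul_sub]; abel_nf
    _ ≤ |r - s| * ‖x ^ n‖ + s * ‖x ^ n - y ^ n‖ := by
        refine (norm_add_le _ _).trans_eq ?_
        rw [norm_smul, norm_smul, Real.norm_eq_abs, Real.norm_of_nonneg hs]
    _ ≤ |r - s| * 1 + s * (n * ‖x - y‖) := by
        gcongr
        exact norm_pow_sub_pow_le_of_norm_le_one_s3 hx hy n
    _ = |r - s| + s * (n * ‖x - y‖) := by rw [mul_one]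

end PowDifference

noncomputable def regNorm {E : Type*} [Norm E] (a : ℝ) (x : E) : ℝ := √(a + ‖x‖ ^ 2)

section RegNorm

variable {E : Type*} [SeminormedAddCommGroup E] {a : ℝ}

theorem regNorm_pos (ha : 0 < a) (x : E) : 0 < regNorm a x :=
  Real.sqrt_pos.2 (by positivity)

theorem sq_regNorm (ha : 0 ≤ a) (x : E) : regNorm a x ^ 2 = a + ‖x‖ ^ 2 :=
  Real.sq_sqrt (by positivity)

theorem norm_le_regNorm (ha : 0 ≤ a) (x : E) : ‖x‖ ≤ regNorm a x :=
  Real.le_sqrt_of_sq_le (by linarith)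

theorem abs_regNorm_sub_regNorm_le (ha : 0 ≤ a) (x y : E) :
    |regNorm a x - regNorm a y| ≤ ‖x - y‖ := by
  have hx := sq_regNorm ha x
  have hy := sq_regNorm ha y
  have hxy : a + ‖x‖ * ‖y‖ ≤ regNorm a x * regNorm a y := by
    rw [regNorm, regNorm, ← Real.sqrt_mul (by positivity)]
    refine Real.le_sqrt_of_sq_le ?_
    nlinarith [sq_nonneg (‖x‖ - ‖y‖)]
  have hnorm : (‖x‖ - ‖y‖) ^ 2 ≤ ‖x - y‖ ^ 2 := by
    simpa only [sq_abs] using pow_le_pow_left₀ (abs_nonneg _) (abs_norm_sub_norm_le x y) 2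
  exact abs_le_of_sq_le_sq (by nlinarith) (norm_nonneg _)

theorem abs_regNorm_rpow_sub_regNorm_rpow_le (ha : 0 ≤ a) {p : ℝ} (hp0 : 0 ≤ p) (hp1 : p ≤ 1)
    (x y : E) : |regNorm a x ^ p - regNorm a y ^ p| ≤ ‖x - y‖ ^ p :=
  (Real.abs_rpow_sub_rpow_le (Real.sqrt_nonneg _) (Real.sqrt_nonneg _) hp0 hp1).trans
    (Real.rpow_le_rpow (abs_nonneg _) (abs_regNorm_sub_regNorm_le ha x y) hp0)

variable [NormedSpace ℝ E]

theorem norm_regNorm_inv_smul_le_one (ha : 0 < a) (x : E) : ‖(regNorm a x)⁻¹ • x‖ ≤ 1 := by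
  rw [norm_smul, norm_inv, Real.norm_of_nonneg (regNorm_pos ha x).le]
  exact inv_mul_le_one_of_le₀ (norm_le_regNorm ha.le x) (regNorm_pos ha x).le

theorem norm_regNorm_inv_smul_sub_le (ha : 0 < a) (x y : E) :
    ‖(regNorm a x)⁻¹ • x - (regNorm a y)⁻¹ • y‖ ≤ 2 * ‖x - y‖ / regNorm a y := by
  have hx := regNorm_pos ha x
  have hy := regNorm_pos ha y
  have hdecomp : (regNorm a x)⁻¹ • x - (regNorm a y)⁻¹ • y = (regNorm a y)⁻¹ • (x - y)
      + ((regNorm a y - regNorm a x) / regNorm a y) • ((regNorm a x)⁻¹ • x) := by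
    match_scalars
    · field_simp
      ring
    · ring
  calc ‖(regNorm a x)⁻¹ • x - (regNorm a y)⁻¹ • y‖
      ≤ (regNorm a y)⁻¹ * ‖x - y‖ + |regNorm a y - regNorm a x| / regNorm a y * 1 := by
        rw [hdecomp]
        refine (norm_add_le _ _).trans (add_le_add ((norm_smul_le _ _).trans_eq ?_) ?_)
        · rw [norm_inv, Real.norm_of_nonneg hy.le]
        · rw [norm_smul, Real.norm_eq_abs, abs_div, abs_of_pos hy]
          gcongr
          exact norm_regNorm_inv_smul_le_one ha x
    _ ≤ 2 * ‖x - y‖ / regNorm a y := by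
        have := abs_regNorm_sub_regNorm_le ha.le x y
        rw [abs_sub_comm]
        field_simp
        linarith

theorem regNorm_rpow_mul_norm_inv_smul_sub_le (ha : 0 < a) {p : ℝ} (hp0 : 0 ≤ p) (hp1 : p ≤ 1)
    (x y : E) :
    regNorm a y ^ p * ‖(regNorm a x)⁻¹ • x - (regNorm a y)⁻¹ • y‖ ≤ 2 * ‖x - y‖ ^ p := by
  have hy := regNorm_pos ha y
  have hbound : ‖(regNorm a x)⁻¹ • x - (regNorm a y)⁻¹ • y‖
      ≤ 2 * min 1 (‖x - y‖ / regNorm a y) := by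
    rw [mul_min_of_nonneg _ _ zero_le_two, le_min_iff, mul_one]
    refine ⟨?_, by simpa only [mul_div_assoc] using norm_regNorm_inv_smul_sub_le ha x y⟩
    calc _ ≤ 1 + 1 := (norm_sub_le _ _).trans
            (add_le_add (norm_regNorm_inv_smul_le_one ha x) (norm_regNorm_inv_smul_le_one ha y))
      _ = 2 := one_add_one_eq_two
  calc regNorm a y ^ p * ‖(regNorm a x)⁻¹ • x - (regNorm a y)⁻¹ • y‖
      ≤ regNorm a y ^ p * (2 * (‖x - y‖ / regNorm a y) ^ p) := by
        gcongr
        exact hbound.trans (by gcongr; exact Real.min_one_le_rpow (by positivity) hp0 hp1)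
    _ = 2 * ‖x - y‖ ^ p := by
        rw [Real.div_rpow (norm_nonneg _) hy.le]
        field_simp [(Real.rpow_pos_of_pos hy p).ne']

theorem rpow_smul_pow_eq_regNorm {A : Type*} [SeminormedRing A] [NormedAlgebra ℝ A] (ha : 0 < a)
    (p : ℝ) (n : ℕ) (x : A) :
    (a + ‖x‖ ^ 2) ^ ((p - n) / 2) • x ^ n = regNorm a x ^ p • ((regNorm a x)⁻¹ • x) ^ n := by
  rw [smul_pow, smul_smul, regNorm, Real.sqrt_rpow_mul_inv_pow (by positivity)]

end RegNorm

/-- Lemma 5.4 (mph:2), first part: for `p ∈ (0,1)` and `n : ℕ`, there is `C > 0` such that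
`| (a + |z|²)^((p−n)/2) z^n − (a + |w|²)^((p−n)/2) w^n | ≤ C |z − w|^p`
for all `a > 0` and `z w : ℂ`. -/
theorem regularized_power_holder (p : ℝ) (hp0 : 0 < p) (hp1 : p < 1) (n : ℕ) :
    ∃ C : ℝ, 0 < C ∧ ∀ a : ℝ, 0 < a → ∀ z w : ℂ,
      ‖((((a + ‖z‖ ^ 2) ^ ((p - (n : ℝ)) / 2) : ℝ) : ℂ) * z ^ n
          - (((a + ‖w‖ ^ 2) ^ ((p - (n : ℝ)) / 2) : ℝ) : ℂ) * w ^ n)‖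
        ≤ C * ‖z - w‖ ^ p := by
  refine ⟨1 + 2 * n, by positivity, fun a ha z w => ?_⟩
  simp only [← Complex.real_smul, rpow_smul_pow_eq_regNorm ha]
  calc _ ≤ |regNorm a z ^ p - regNorm a w ^ p|
          + regNorm a w ^ p * (n * ‖(regNorm a z)⁻¹ • z - (regNorm a w)⁻¹ • w‖) :=
        norm_smul_pow_sub_smul_pow_le (norm_regNorm_inv_smul_le_one ha z)
          (norm_regNorm_inv_smul_le_one ha w) _ (Real.rpow_nonneg (regNorm_pos ha w).le p) n
    _ ≤ ‖z - w‖ ^ p + n * (2 * ‖z - w‖ ^ p) := by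
        rw [mul_left_comm]
        exact add_le_add (abs_regNorm_rpow_sub_regNorm_rpow_le ha.le hp0.le hp1.le z w)
          (mul_le_mul_of_nonneg_left (regNorm_rpow_mul_norm_inv_smul_sub_le ha hp0.le hp1.le z w)
            n.cast_nonneg)
    _ = (1 + 2 * n) * ‖z - w‖ ^ p := by ring
end

section
/- Let p ∈ (0,1) be real and n ∈ ℕ (including n = 0). There exists a constant C > 0 (depending on p and n) such that for all reals a > 0 and all complex z, w one has | (a + |z|²)^{(p−n)/2} |z|^n − (a + |w|²)^{(p−n)/2} |w|^n | ≤ C |z − w|^p. -/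
/-!
With `c = (p - n) / 2`, the function `g r = (a + r²)^c rⁿ` has derivative
`(a + r²)^(c-1) r^(n-1) (p r² + n a)`. It lies between `0` and `(p + n) r^(p-1)`, a bound
free of `a`, because `r² ≤ a + r²`, `c - 1 < 0`, and `c ≤ 0` once `n ≥ 1`. Comparing `g`
with `((p + n) / p) r^p` gives `|g r - g s| ≤ ((p + n) / p) |r^p - s^p|`, and
`|r^p - s^p| ≤ |r - s|^p` by subadditivity of `t ↦ t^p`.
-/

open Real Set

lemma abs_rpow_sub_rpow_le_abs_sub_rpow {p x y : ℝ} (hx : 0 ≤ x) (hy : 0 ≤ y) (hp0 : 0 ≤ p)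
    (hp1 : p ≤ 1) : |x ^ p - y ^ p| ≤ |x - y| ^ p := by
  wlog hyx : y ≤ x generalizing x y
  · rw [abs_sub_comm, abs_sub_comm x]
    exact this hy hx (le_of_not_ge hyx)
  have hsub := rpow_add_le_add_rpow (sub_nonneg.2 hyx) hy hp0 hp1
  rw [sub_add_cancel] at hsub
  rw [abs_of_nonneg (sub_nonneg.2 (rpow_le_rpow hy hyx hp0)), abs_of_nonneg (sub_nonneg.2 hyx)]
  linarith

lemma monotoneOn_mul_rpow_sub_of_deriv_le {f f' : ℝ → ℝ} {K p : ℝ} (hp : 0 < p)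
    (hf : ContinuousOn f (Ici 0)) (hf' : ∀ x > 0, HasDerivAt f (f' x) x)
    (hbound : ∀ x > 0, f' x ≤ K * x ^ (p - 1)) :
    MonotoneOn (fun x => K / p * x ^ p - f x) (Ici 0) := by
  have hderiv (x : ℝ) (hx : 0 < x) :
      HasDerivAt (fun x => K / p * x ^ p - f x) (K * x ^ (p - 1) - f' x) x := by
    refine (((hasDerivAt_rpow_const (Or.inl hx.ne')).const_mul (K / p)).fun_sub
      (hf' x hx)).congr_deriv ?_
    field_simp
  have hcont : ContinuousOn (fun x => K / p * x ^ p - f x) (Ici 0) :=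
    (continuousOn_const.mul (continuousOn_id.rpow_const fun _ _ => Or.inr hp.le)).sub hf
  refine monotoneOn_of_hasDerivWithinAt_nonneg (f' := fun x => K * x ^ (p - 1) - f' x)
    (convex_Ici 0) hcont (fun x hx => ?_) fun x hx => ?_
  · rw [interior_Ici] at hx ⊢
    exact (hderiv x hx).hasDerivWithinAt
  · rw [interior_Ici] at hx
    exact sub_nonneg.2 (hbound x hx)

lemma abs_sub_le_of_abs_deriv_le_rpow {f f' : ℝ → ℝ} {K p : ℝ} (hp0 : 0 < p) (hp1 : p ≤ 1)
    (hf : ContinuousOn f (Ici 0)) (hf' : ∀ x > 0, HasDerivAt f (f' x) x)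
    (hbound : ∀ x > 0, |f' x| ≤ K * x ^ (p - 1)) {x y : ℝ} (hx : 0 ≤ x) (hy : 0 ≤ y) :
    |f x - f y| ≤ K / p * |x - y| ^ p := by
  wlog hyx : y ≤ x generalizing x y
  · rw [abs_sub_comm, abs_sub_comm x]
    exact this hy hx (le_of_not_ge hyx)
  have hK : 0 ≤ K / p := by
    have := (abs_nonneg _).trans (hbound 1 one_pos)
    rw [one_rpow, mul_one] at this
    positivity
  have hupper := monotoneOn_mul_rpow_sub_of_deriv_le hp0 hf hf'
    (fun x hx => (le_abs_self _).trans (hbound x hx)) hy hx hyx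
  have hlower := monotoneOn_mul_rpow_sub_of_deriv_le (f := -f) (f' := -f') hp0 hf.neg
    (fun x hx => (hf' x hx).neg) (fun x hx => (neg_le_abs _).trans (hbound x hx)) hy hx hyx
  simp only [Pi.neg_apply, sub_neg_eq_add] at hupper hlower
  calc |f x - f y| ≤ K / p * (x ^ p - y ^ p) := abs_le.2 ⟨by linarith, by linarith⟩
    _ ≤ K / p * |x - y| ^ p := mul_le_mul_of_nonneg_left
        ((le_abs_self _).trans (abs_rpow_sub_rpow_le_abs_sub_rpow hx hy hp0.le hp1)) hK

noncomputable def regularizedModulusPower (a p : ℝ) (n : ℕ) (r : ℝ) : ℝ :=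
  (a + r ^ 2) ^ ((p - n) / 2) * r ^ n

noncomputable def regularizedModulusPowerDeriv (a p : ℝ) (n : ℕ) (r : ℝ) : ℝ :=
  (a + r ^ 2) ^ ((p - n) / 2 - 1) * r ^ ((n : ℝ) - 1) * (p * r ^ 2 + n * a)

section

variable {a p r : ℝ} {n : ℕ}

lemma continuous_regularizedModulusPower (ha : 0 < a) :
    Continuous (regularizedModulusPower a p n) :=
  ((continuous_const.add (continuous_pow 2)).rpow_const fun x =>
    Or.inl (add_pos_of_pos_of_nonneg ha (sq_nonneg x)).ne').mul (continuous_pow n)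

lemma hasDerivAt_regularizedModulusPower (ha : 0 < a) (hr : 0 < r) :
    HasDerivAt (regularizedModulusPower a p n) (regularizedModulusPowerDeriv a p n r) r := by
  set A := a + r ^ 2
  set c := (p - n) / 2
  have hA : 0 < A := by positivity
  have hbase : HasDerivAt (fun r : ℝ => a + r ^ 2) (2 * r) r := by
    simpa using (hasDerivAt_pow 2 r).const_add a
  have hpow : HasDerivAt (fun r : ℝ => r ^ n) (n * r ^ ((n : ℝ) - 1)) r := by
    simpa only [rpow_natCast] using hasDerivAt_rpow_const (p := (n : ℝ)) (Or.inl hr.ne')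
  refine (((hasDerivAt_rpow_const (p := c) (Or.inl hA.ne')).comp r hbase).mul hpow).congr_deriv ?_
  have hAc : A ^ c = A ^ (c - 1) * A := by rw [← rpow_add_one hA.ne', sub_add_cancel]
  have hrn : r ^ n = r ^ ((n : ℝ) - 1) * r := by
    rw [← rpow_add_one hr.ne', sub_add_cancel, rpow_natCast]
  have h2c : 2 * c = p - n := by ring
  simp only [Function.comp_apply, regularizedModulusPowerDeriv]
  rw [hAc, hrn]
  linear_combination A ^ (c - 1) * r ^ ((n : ℝ) - 1) * r ^ 2 * h2c

lemma abs_regularizedModulusPowerDeriv_le (ha : 0 < a) (hp0 : 0 ≤ p) (hp1 : p ≤ 1)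
    (hr : 0 < r) :
    |regularizedModulusPowerDeriv a p n r| ≤ (p + n) * r ^ (p - 1) := by
  set A := a + r ^ 2
  set c := (p - n) / 2 with hc
  have hrA : r ^ 2 ≤ A := by linarith
  have hr2 : 0 < r ^ 2 := by positivity
  have hsq : r ^ 2 * A ^ (c - 1) ≤ (r ^ 2) ^ c := calc
    r ^ 2 * A ^ (c - 1) ≤ r ^ 2 * (r ^ 2) ^ (c - 1) :=
      mul_le_mul_of_nonneg_left
        (rpow_le_rpow_of_nonpos hr2 hrA (by linarith [n.cast_nonneg' (α := ℝ)])) hr2.le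
    _ = (r ^ 2) ^ c := by rw [mul_comm, ← rpow_add_one hr2.ne', sub_add_cancel]
  have hconst : n * (a * A ^ (c - 1)) ≤ n * (r ^ 2) ^ c := by
    rcases n.eq_zero_or_pos with rfl | hn
    · simp
    gcongr
    calc a * A ^ (c - 1) ≤ A * A ^ (c - 1) := by gcongr; linarith
      _ = A ^ c := by rw [mul_comm, ← rpow_add_one (by positivity), sub_add_cancel]
      _ ≤ (r ^ 2) ^ c := rpow_le_rpow_of_nonpos hr2 hrA (by
        linarith [(Nat.one_le_cast.2 hn : (1 : ℝ) ≤ n)])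
  have hexp : (r ^ 2) ^ c * r ^ ((n : ℝ) - 1) = r ^ (p - 1) := by
    rw [← rpow_natCast, ← rpow_mul hr.le, ← rpow_add hr]
    congr 1
    push_cast
    ring
  have hnonneg : 0 ≤ regularizedModulusPowerDeriv a p n r := by
    unfold regularizedModulusPowerDeriv; positivity
  rw [abs_of_nonneg hnonneg, ← hexp]
  calc regularizedModulusPowerDeriv a p n r
      = (p * (r ^ 2 * A ^ (c - 1)) + n * (a * A ^ (c - 1))) * r ^ ((n : ℝ) - 1) := by
        unfold regularizedModulusPowerDeriv; ring
    _ ≤ (p * (r ^ 2) ^ c + n * (r ^ 2) ^ c) * r ^ ((n : ℝ) - 1) := by gcongr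
    _ = (p + n) * ((r ^ 2) ^ c * r ^ ((n : ℝ) - 1)) := by ring

lemma abs_regularizedModulusPower_sub_le (ha : 0 < a) (hp0 : 0 < p) (hp1 : p ≤ 1) {s : ℝ}
    (hr : 0 ≤ r) (hs : 0 ≤ s) :
    |regularizedModulusPower a p n r - regularizedModulusPower a p n s| ≤
      (p + n) / p * |r - s| ^ p :=
  abs_sub_le_of_abs_deriv_le_rpow hp0 hp1 (continuous_regularizedModulusPower ha).continuousOn
    (fun _ hx => hasDerivAt_regularizedModulusPower ha hx)
    (fun _ hx => abs_regularizedModulusPowerDeriv_le ha hp0.le hp1 hx) hr hs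

end

/-- Lemma 5.4 (mph:2), second part: for `p ∈ (0,1)` and `n : ℕ`, there is `C > 0` such that
`| (a + |z|²)^((p−n)/2) |z|^n − (a + |w|²)^((p−n)/2) |w|^n | ≤ C |z − w|^p`
for all `a > 0` and `z w : ℂ`. -/
theorem regularized_modulus_power_holder (p : ℝ) (hp0 : 0 < p) (hp1 : p < 1) (n : ℕ) :
    ∃ C : ℝ, 0 < C ∧ ∀ a : ℝ, 0 < a → ∀ z w : ℂ,
      |(a + ‖z‖ ^ 2) ^ ((p - (n : ℝ)) / 2) * ‖z‖ ^ n
          - (a + ‖w‖ ^ 2) ^ ((p - (n : ℝ)) / 2) * ‖w‖ ^ n|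
        ≤ C * ‖z - w‖ ^ p := by
  refine ⟨(p + n) / p, by positivity, fun a ha z w => ?_⟩
  calc _ ≤ (p + n) / p * |‖z‖ - ‖w‖| ^ p :=
        abs_regularizedModulusPower_sub_le ha hp0 hp1.le (norm_nonneg z) (norm_nonneg w)
    _ ≤ (p + n) / p * ‖z - w‖ ^ p := by
        gcongr
        exact abs_norm_sub_norm_le z w
end

section
/- Let p ∈ (0,1) be real. For all reals a > 0 and all complex z one has | ( |z|^p − (a + |z|²)^{p/2} ) z | ≤ a^p |z|^{1−p}. -/
/-! For `u = |z|²` the claim reads `((a + u)^(p/2) - u^(p/2)) u^(p/2) ≤ a^p` after multiplying by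
`|z|^(p-1)`. When `u ≤ a`, subadditivity of `x ↦ x^(p/2)` bounds the difference by `a^(p/2)`, and
`u^(p/2) ≤ a^(p/2)`. When `u ≥ a`, concavity (Bernoulli) bounds the difference by
`(p/2) a u^(p/2-1)`, so the product is at most `(p/2) a u^(p-1) ≤ (p/2) a^p`, using `p ≤ 1`. -/

open Real

namespace Real

lemma add_rpow_le_rpow_add_mul_rpow_sub_one {q a u : ℝ} (hq0 : 0 ≤ q) (hq1 : q ≤ 1) (ha : 0 ≤ a)
    (hu : 0 < u) : (u + a) ^ q ≤ u ^ q + q * a * u ^ (q - 1) := by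
  have hsplit : u + a = u * (1 + a / u) := by field_simp
  have hbernoulli : (1 + a / u) ^ q ≤ 1 + q * (a / u) :=
    rpow_one_add_le_one_add_mul_self (by linarith [div_nonneg ha hu.le]) hq0 hq1
  calc (u + a) ^ q = u ^ q * (1 + a / u) ^ q := by
        rw [hsplit, mul_rpow hu.le (by positivity)]
    _ ≤ u ^ q * (1 + q * (a / u)) := by gcongr
    _ = u ^ q + q * a * u ^ (q - 1) := by
        rw [rpow_sub_one hu.ne']
        field_simp

lemma rpow_add_sub_rpow_mul_rpow_le {p a u : ℝ} (hp0 : 0 ≤ p) (hp1 : p ≤ 1) (ha : 0 < a)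
    (hu : 0 ≤ u) : ((a + u) ^ (p / 2) - u ^ (p / 2)) * u ^ (p / 2) ≤ a ^ p := by
  have hq0 : 0 ≤ p / 2 := by positivity
  have hq1 : p / 2 ≤ 1 := by linarith
  rcases le_total u a with hua | hau
  · have hdiff : (a + u) ^ (p / 2) - u ^ (p / 2) ≤ a ^ (p / 2) := by
      linarith [rpow_add_le_add_rpow ha.le hu hq0 hq1]
    calc ((a + u) ^ (p / 2) - u ^ (p / 2)) * u ^ (p / 2) ≤ a ^ (p / 2) * a ^ (p / 2) := by
          gcongr
      _ = a ^ p := by rw [← rpow_add ha, add_halves]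
  · have hu_pos : 0 < u := ha.trans_le hau
    have hdiff : (a + u) ^ (p / 2) - u ^ (p / 2) ≤ p / 2 * a * u ^ (p / 2 - 1) := by
      linarith [add_comm a u ▸ add_rpow_le_rpow_add_mul_rpow_sub_one hq0 hq1 ha.le hu_pos]
    calc ((a + u) ^ (p / 2) - u ^ (p / 2)) * u ^ (p / 2)
        ≤ p / 2 * a * u ^ (p / 2 - 1) * u ^ (p / 2) := by gcongr
      _ = p / 2 * a * u ^ (p - 1) := by
          rw [mul_assoc, ← rpow_add hu_pos]
          ring_nf
      _ ≤ p / 2 * a * a ^ (p - 1) :=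
          mul_le_mul_of_nonneg_left (rpow_le_rpow_of_nonpos ha hau (by linarith)) (by positivity)
      _ = p / 2 * a ^ p := by
          rw [rpow_sub_one ha.ne']
          field_simp
      _ ≤ a ^ p := mul_le_of_le_one_left (by positivity) (by linarith)

end Real

/-- Lemma 5.4 (mph:3): for `p ∈ (0,1)`, all `a > 0` and `z : ℂ`,
`| (|z|^p − (a + |z|²)^(p/2)) z | ≤ a^p |z|^(1−p)`. -/
theorem modification_error_weighted_bound (p : ℝ) (hp0 : 0 < p) (hp1 : p < 1) :
    ∀ a : ℝ, 0 < a → ∀ z : ℂ,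
      ‖(((‖z‖ ^ p - (a + ‖z‖ ^ 2) ^ (p / 2)) : ℝ) : ℂ) * z‖
        ≤ a ^ p * ‖z‖ ^ (1 - p) := by
  intro a ha z
  set r := ‖z‖
  have hr : 0 ≤ r := norm_nonneg z
  have hsq : (r ^ 2) ^ (p / 2) = r ^ p := by
    rw [← rpow_natCast, ← rpow_mul hr]
    ring_nf
  have hkey := rpow_add_sub_rpow_mul_rpow_le hp0.le hp1.le ha (sq_nonneg r)
  rw [hsq] at hkey
  have hdiff : 0 ≤ (a + r ^ 2) ^ (p / 2) - r ^ p := by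
    rw [← hsq, sub_nonneg]
    gcongr
    linarith
  calc ‖(((r ^ p - (a + r ^ 2) ^ (p / 2)) : ℝ) : ℂ) * z‖
      = ((a + r ^ 2) ^ (p / 2) - r ^ p) * r ^ p * r ^ (1 - p) := by
        rw [norm_mul, Complex.norm_real, norm_eq_abs, abs_sub_comm, abs_of_nonneg hdiff,
          mul_assoc, ← rpow_add' hr (by norm_num), add_sub_cancel, rpow_one]
    _ ≤ a ^ p * r ^ (1 - p) := by gcongr
end

section
/- Let p ∈ (0,1) be real. There exists a constant C > 0 (depending on p) such that for all reals a > 0 and all complex z, w one has | |𝒜₂(a;z)| − |𝒜₂(a;w)| | ≤ C |z − w|^p, where 𝒜₂(a;z) = ( |z|^{p−2} − (a + |z|²)^{(p−2)/2} ) z²; i.e., the modulus of 𝒜₂(a;·) is Hölder continuous of order p on ℂ, uniformly in a > 0. -/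
/-!
Since `|𝒜₂(a;z)| = φ(|z|)` with `φ(t) = t^p - t²(a + t²)^((p-2)/2)`, it suffices to show that `φ` is
`p`-Hölder on `[0, ∞)`. The subtracted term has derivative `2t(a + t²)^((p-4)/2)(a + p t²/2)`, which
lies between `0` and `2t^(p-1)`, so `|φ'| ≤ (2/p)(t^p)'`. Hence
`|φ r - φ s| ≤ (2/p)|r^p - s^p| ≤ (2/p)|r - s|^p` by subadditivity of `t ↦ t^p`, and
`||z| - |w|| ≤ |z - w|` finishes the proof.
-/

open Real Set

lemma rpow_sub_rpow_le_rpow_sub {p s r : ℝ} (hp0 : 0 ≤ p) (hp1 : p ≤ 1) (hs : 0 ≤ s)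
    (hsr : s ≤ r) : r ^ p - s ^ p ≤ (r - s) ^ p := by
  have := rpow_add_le_add_rpow (sub_nonneg.2 hsr) hs hp0 hp1
  rw [sub_add_cancel] at this
  linarith

lemma abs_sub_le_sub_of_abs_hasDerivAt_le {f f' h h' : ℝ → ℝ} {D : Set ℝ} (hD : Convex ℝ D)
    (hf : ContinuousOn f D) (hh : ContinuousOn h D)
    (hf' : ∀ x ∈ interior D, HasDerivAt f (f' x) x)
    (hh' : ∀ x ∈ interior D, HasDerivAt h (h' x) x)
    (bound : ∀ x ∈ interior D, |f' x| ≤ h' x) {x y : ℝ} (hx : x ∈ D) (hy : y ∈ D)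
    (hxy : x ≤ y) : |f y - f x| ≤ h y - h x := by
  have hsub : MonotoneOn (fun t => h t - f t) D :=
    monotoneOn_of_hasDerivWithinAt_nonneg hD (hh.sub hf)
      (fun t ht => ((hh' t ht).sub (hf' t ht)).hasDerivWithinAt)
      (fun t ht => by linarith [(abs_le.1 (bound t ht)).2])
  have hadd : MonotoneOn (fun t => h t + f t) D :=
    monotoneOn_of_hasDerivWithinAt_nonneg hD (hh.add hf)
      (fun t ht => ((hh' t ht).add (hf' t ht)).hasDerivWithinAt)
      (fun t ht => by linarith [(abs_le.1 (bound t ht)).1])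
  have h₁ := hsub hx hy hxy
  have h₂ := hadd hx hy hxy
  simp only at h₁ h₂
  rw [abs_le]
  constructor <;> linarith

/-- `|𝒜₂(a;z)|` as a function of `t = |z|`. -/
noncomputable def radialA2 (p a t : ℝ) : ℝ := t ^ p - t ^ 2 * (a + t ^ 2) ^ ((p - 2) / 2)

lemma sq_rpow_div_two {t : ℝ} (ht : 0 ≤ t) (x : ℝ) : (t ^ 2) ^ (x / 2) = t ^ x := by
  rw [← rpow_natCast_mul ht]
  push_cast
  ring_nf

lemma norm_A2_eq_radialA2 {p a : ℝ} (hp0 : 0 < p) (hp2 : p ≤ 2) (ha : 0 ≤ a) (z : ℂ) :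
    ‖(((‖z‖ ^ (p - 2) - (a + ‖z‖ ^ 2) ^ ((p - 2) / 2) : ℝ)) : ℂ) * z ^ 2‖ = radialA2 p a ‖z‖ := by
  rcases eq_or_ne z 0 with rfl | hz
  · simp [radialA2, zero_rpow hp0.ne']
  have ht : 0 < ‖z‖ := norm_pos_iff.2 hz
  have hle : (a + ‖z‖ ^ 2) ^ ((p - 2) / 2) ≤ ‖z‖ ^ (p - 2) := by
    rw [← sq_rpow_div_two ht.le]
    exact rpow_le_rpow_of_nonpos (by positivity) (by linarith) (by linarith)
  have hpow : ‖z‖ ^ (p - 2) * ‖z‖ ^ 2 = ‖z‖ ^ p := by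
    rw [← rpow_natCast, ← rpow_add ht]
    norm_num
  rw [norm_mul, Complex.norm_real, norm_pow, Real.norm_of_nonneg (sub_nonneg.2 hle), sub_mul,
    hpow, radialA2]
  ring

lemma hasDerivAt_radialA2 {p a t : ℝ} (ha : 0 ≤ a) (ht : 0 < t) :
    HasDerivAt (radialA2 p a)
      (p * t ^ (p - 1) - 2 * t * (a + t ^ 2) ^ ((p - 2) / 2 - 1) * (a + p / 2 * t ^ 2)) t := by
  have hu : 0 < a + t ^ 2 := by positivity
  have hpow := hasDerivAt_rpow_const (p := p) (Or.inl ht.ne')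
  have hreg := (hasDerivAt_pow 2 t).mul
    (((hasDerivAt_pow 2 t).const_add a).rpow_const (p := (p - 2) / 2) (Or.inl hu.ne'))
  refine (hpow.sub hreg).congr_deriv ?_
  rw [show (a + t ^ 2) ^ ((p - 2) / 2) = (a + t ^ 2) ^ ((p - 2) / 2 - 1) * (a + t ^ 2) by
    rw [rpow_sub_one hu.ne']; field_simp]
  push_cast
  ring

lemma abs_deriv_radialA2_le {p a t : ℝ} (hp0 : 0 < p) (hp2 : p ≤ 2) (ha : 0 ≤ a) (ht : 0 < t) :
    |p * t ^ (p - 1) - 2 * t * (a + t ^ 2) ^ ((p - 2) / 2 - 1) * (a + p / 2 * t ^ 2)|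
      ≤ 2 * t ^ (p - 1) := by
  have hu : 0 < a + t ^ 2 := by positivity
  have hreg_nonneg : 0 ≤ 2 * t * (a + t ^ 2) ^ ((p - 2) / 2 - 1) * (a + p / 2 * t ^ 2) := by
    positivity
  have hreg_le : 2 * t * (a + t ^ 2) ^ ((p - 2) / 2 - 1) * (a + p / 2 * t ^ 2)
      ≤ 2 * t ^ (p - 1) :=
    calc 2 * t * (a + t ^ 2) ^ ((p - 2) / 2 - 1) * (a + p / 2 * t ^ 2)
        ≤ 2 * t * (a + t ^ 2) ^ ((p - 2) / 2 - 1) * (a + t ^ 2) := by gcongr; nlinarith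
      _ = 2 * t * (a + t ^ 2) ^ ((p - 2) / 2) := by
        rw [rpow_sub_one hu.ne']; field_simp
      _ ≤ 2 * t * (t ^ 2) ^ ((p - 2) / 2) := by
        gcongr 2 * t * ?_
        exact rpow_le_rpow_of_nonpos (by positivity) (by linarith) (by linarith)
      _ = 2 * t ^ (p - 1) := by
        rw [sq_rpow_div_two ht.le, show p - 1 = p - 2 + 1 by ring, rpow_add_one ht.ne']
        ring
  have hpow : 0 ≤ p * t ^ (p - 1) := by positivity
  have hpow_le : p * t ^ (p - 1) ≤ 2 * t ^ (p - 1) := by gcongr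
  rw [abs_le]
  constructor <;> linarith

lemma continuousOn_radialA2 {p a : ℝ} (hp0 : 0 < p) (ha : 0 < a) :
    ContinuousOn (radialA2 p a) (Ici 0) := by
  refine (continuousOn_id.rpow_const fun _ _ => Or.inr hp0.le).sub (Continuous.continuousOn ?_)
  exact (continuous_pow 2).mul ((continuous_const.add (continuous_pow 2)).rpow_const
    fun t => Or.inl (add_pos_of_pos_of_nonneg ha (sq_nonneg t)).ne')

lemma abs_radialA2_sub_le {p a s r : ℝ} (hp0 : 0 < p) (hp1 : p ≤ 1) (ha : 0 < a)
    (hs : 0 ≤ s) (hr : 0 ≤ r) :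
    |radialA2 p a r - radialA2 p a s| ≤ 2 / p * |r - s| ^ p := by
  wlog hsr : s ≤ r generalizing s r
  · rw [abs_sub_comm, abs_sub_comm r]
    exact this hr hs (le_of_not_ge hsr)
  have hmain : |radialA2 p a r - radialA2 p a s| ≤ 2 / p * r ^ p - 2 / p * s ^ p := by
    refine abs_sub_le_sub_of_abs_hasDerivAt_le (convex_Ici 0) (continuousOn_radialA2 hp0 ha)
      ((continuousOn_id.rpow_const fun _ _ => Or.inr hp0.le).const_smul (2 / p))
      (fun t ht => hasDerivAt_radialA2 ha.le (interior_Ici.subset ht))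
      (fun t ht => (hasDerivAt_rpow_const (Or.inl (interior_Ici.subset ht).ne')).const_mul (2 / p))
      (fun t ht => ?_) hs hr hsr
    convert abs_deriv_radialA2_le hp0 (by linarith) ha.le (interior_Ici.subset ht) using 1
    field_simp
  calc |radialA2 p a r - radialA2 p a s| ≤ 2 / p * (r ^ p - s ^ p) := by linarith
    _ ≤ 2 / p * |r - s| ^ p := by
      rw [abs_of_nonneg (sub_nonneg.2 hsr)]
      gcongr
      exact rpow_sub_rpow_le_rpow_sub hp0.le hp1 hs hsr

/-- p_c-Hölder continuity of `|𝒜₂(a;·)|`, where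
`𝒜₂(a;z) = (|z|^(p−2) − (a + |z|²)^((p−2)/2)) z²` (used in the proof of Proposition 5.1):
for `p ∈ (0,1)` there is `C > 0` such that for all `a > 0` and `z w : ℂ`,
`| |𝒜₂(a;z)| − |𝒜₂(a;w)| | ≤ C |z − w|^p`. -/
theorem abs_A2_holder (p : ℝ) (hp0 : 0 < p) (hp1 : p < 1) :
    ∃ C : ℝ, 0 < C ∧ ∀ a : ℝ, 0 < a → ∀ z w : ℂ,
      |‖(((‖z‖ ^ (p - 2)
              - (a + ‖z‖ ^ 2) ^ ((p - 2) / 2)) : ℝ) : ℂ) * z ^ 2‖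
        - ‖(((‖w‖ ^ (p - 2)
              - (a + ‖w‖ ^ 2) ^ ((p - 2) / 2)) : ℝ) : ℂ) * w ^ 2‖|
        ≤ C * ‖z - w‖ ^ p := by
  refine ⟨2 / p, by positivity, fun a ha z w => ?_⟩
  rw [norm_A2_eq_radialA2 hp0 (by linarith) ha.le, norm_A2_eq_radialA2 hp0 (by linarith) ha.le]
  calc _ ≤ 2 / p * |‖z‖ - ‖w‖| ^ p :=
        abs_radialA2_sub_le hp0 hp1.le ha (norm_nonneg w) (norm_nonneg z)
    _ ≤ 2 / p * ‖z - w‖ ^ p := by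
      gcongr
      exact abs_norm_sub_norm_le z w
end
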